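/- arXiv:2502.01255 — 3 statements merged into one kernel-verified Lean document; each statement's English description precedes it below -/
import Mathlib

section
/- Let X have the HLG distribution with parameter θ ∈ (0,1). Then for real t with −1 < t < 1, the moment generating function satisfies E[e^{tX}] = (2/(2−θ)) · (θ/(2−θ))^{−t} · B(1 − θ/2; 1−t, 1+t), where B(z; a, b) = ∫₀^z u^{a−1}(1−u)^{b−1} du is the incomplete beta function. -/
/-!
The substitution `u = b / (a eˣ + b)` maps `(0, ∞)` decreasingly onto `(0, b / (a + b))`, with
`1 - u = a eˣ / (a eˣ + b)` and `|du| = a b eˣ / (a eˣ + b)² dx`. Hence `u^(-t) (1 - u)^t |du|` is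
`(a / b)^t e^(tx) · a b eˣ / (a eˣ + b)² dx`, which is the HLG moment integrand up to a constant when
`a = θ`, `b = 2 - θ`.
-/

open MeasureTheory Real

/-- The incomplete beta function `B(z; a, b) = ∫₀^z u^(a-1) (1-u)^(b-1) du`. -/
noncomputable def incBeta (z a b : ℝ) : ℝ :=
  ∫ u in (0 : ℝ)..z, u ^ (a - 1) * (1 - u) ^ (b - 1)

open Set

section Substitution

variable {a b : ℝ}

theorem hasDerivAt_div_mul_exp_add (x : ℝ) (hD : a * exp x + b ≠ 0) :
    HasDerivAt (fun x => b / (a * exp x + b)) (-(b * (a * exp x)) / (a * exp x + b) ^ 2) x :=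
  ((hasDerivAt_const x b).fun_div (((hasDerivAt_exp x).const_mul a).add_const b) hD).congr_deriv
    (by ring)

theorem strictAnti_div_mul_exp_add (ha : 0 < a) (hb : 0 < b) :
    StrictAnti fun x => b / (a * exp x + b) := fun x y hxy =>
  div_lt_div_of_pos_left hb (by positivity) (by gcongr)

theorem image_Ioi_div_mul_exp_add (ha : 0 < a) (hb : 0 < b) :
    (fun x => b / (a * exp x + b)) '' Ioi 0 = Ioo 0 (b / (a + b)) := by
  ext y
  constructor
  · rintro ⟨x, hx, rfl⟩
    have : 1 < exp x := one_lt_exp_iff.mpr hx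
    exact ⟨by positivity, div_lt_div_of_pos_left hb (by positivity) (by nlinarith)⟩
  · rintro ⟨hy0, hy⟩
    have hy' : (a + b) * y < b := (lt_div_iff₀' (by positivity)).mp hy
    -- the inverse map `y ↦ log (b (1 - y) / (a y))`
    have hq : 0 < b * (1 - y) / (a * y) := by
      apply div_pos _ (by positivity); nlinarith
    refine ⟨log (b * (1 - y) / (a * y)), log_pos ?_, ?_⟩
    · rw [one_lt_div (by positivity)]; linarith
    · simp only [exp_log hq]
      field_simp
      ring

theorem integral_Ioo_rpow_neg_mul_one_sub_rpow (ha : 0 < a) (hb : 0 < b) (t : ℝ) :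
    ∫ u in Ioo 0 (b / (a + b)), u ^ (-t) * (1 - u) ^ t =
      (a / b) ^ t * b * ∫ x in Ioi 0, exp (t * x) * (a * exp (-x) / (a + b * exp (-x)) ^ 2) := by
  have hD : ∀ x, 0 < a * exp x + b := fun x => by positivity
  rw [← image_Ioi_div_mul_exp_add ha hb,
    integral_image_eq_integral_abs_deriv_smul measurableSet_Ioi
      (fun x _ => (hasDerivAt_div_mul_exp_add x (hD x).ne').hasDerivWithinAt)
      (strictAnti_div_mul_exp_add ha hb).injective.injOn,
    ← integral_const_mul]
  congr 1
  ext x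
  have hDx := hD x
  have hrpow : (b / (a * exp x + b)) ^ (-t) * (1 - b / (a * exp x + b)) ^ t =
      (a / b) ^ t * exp (t * x) := by
    have hone_sub : 1 - b / (a * exp x + b) = a * exp x / (a * exp x + b) := by
      field_simp; ring
    rw [hone_sub, rpow_neg (by positivity), ← inv_rpow (by positivity), inv_div,
      ← mul_rpow (by positivity) (by positivity), mul_comm t x, exp_mul,
      ← mul_rpow (by positivity) (by positivity)]
    congr 1
    field_simp
  have hden : a + b * exp (-x) = exp (-x) * (a * exp x + b) := by
    rw [exp_neg]; field_simp
  rw [smul_eq_mul, hrpow, abs_div, abs_neg, abs_of_pos (by positivity),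
    abs_of_pos (by positivity), hden, exp_neg]
  field_simp

end Substitution

theorem hlg_mgf_general (θ : ℝ) (hθ0 : 0 < θ) (hθ1 : θ < 1) (t : ℝ) :
    ∫ x in Set.Ioi (0 : ℝ),
        Real.exp (t * x) * (2 * θ * Real.exp (-x) / (θ + (2 - θ) * Real.exp (-x)) ^ 2) =
      (2 / (2 - θ)) * (θ / (2 - θ)) ^ (-t) * incBeta (1 - θ / 2) (1 - t) (1 + t) := by
  have hc : 0 < 2 - θ := by linarith
  have hbeta : incBeta (1 - θ / 2) (1 - t) (1 + t) =
      ∫ u in Ioo 0 ((2 - θ) / (θ + (2 - θ))), u ^ (-t) * (1 - u) ^ t := by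
    rw [incBeta, intervalIntegral.integral_of_le (by linarith), integral_Ioc_eq_integral_Ioo]
    congr 1 <;> ring_nf
  rw [hbeta, integral_Ioo_rpow_neg_mul_one_sub_rpow hθ0 hc, ← mul_assoc, ← mul_assoc,
    mul_assoc (2 / (2 - θ)), ← rpow_add (by positivity), neg_add_cancel, rpow_zero, mul_one,
    ← integral_const_mul]
  field_simp
  congr 1
  ext x
  ring

theorem hlg_mgf (θ : ℝ) (hθ0 : 0 < θ) (hθ1 : θ < 1) (t : ℝ) (ht1 : -1 < t) (ht2 : t < 1) :
    ∫ x in Set.Ioi (0 : ℝ),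
        Real.exp (t * x) * (2 * θ * Real.exp (-x) / (θ + (2 - θ) * Real.exp (-x)) ^ 2) =
      (2 / (2 - θ)) * (θ / (2 - θ)) ^ (-t) * incBeta (1 - θ / 2) (1 - t) (1 + t) :=
  hlg_mgf_general θ hθ0 hθ1 t
end

section
/- For the HLG distribution with parameter θ ∈ (0,1), real γ > 0 and real t with t < γ, ∫₀^∞ e^{tx} F̄(x)^{γ−1} f(x) dx = (2/(2−θ))^γ (θ/(2−θ))^{−t} B(1 − θ/2; γ − t, 1 + t), where B(z; a, b) is the incomplete beta function. -/
/-! Substitute `u = (1 - θ/2) F̄(x)`: it maps `(0, ∞)` decreasingly onto `(0, 1 - θ/2)` with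
`du = -(1 - θ/2) f(x) dx`, and `1 - u = θ / (θ + (2 - θ) e^{-x})`. Writing `e^{tx} = (e^{-x})^{-t}`,
the integrand of the incomplete beta function pulled back along this substitution is the
left-hand integrand times the constant `(2/(2-θ))^{-γ} (θ/(2-θ))^{t}`. -/

open MeasureTheory Real

open Set

namespace HLG

noncomputable def survival (θ x : ℝ) : ℝ :=
  1 - θ * (1 - exp (-x)) / (θ + (2 - θ) * exp (-x))

noncomputable def pdf (θ x : ℝ) : ℝ :=
  2 * θ * exp (-x) / (θ + (2 - θ) * exp (-x)) ^ 2

variable {θ : ℝ}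

lemma denom_pos (hθ0 : 0 < θ) (hθ2 : θ < 2) (x : ℝ) : 0 < θ + (2 - θ) * exp (-x) := by
  have : 0 < 2 - θ := by linarith
  positivity

lemma survival_eq (hθ0 : 0 < θ) (hθ2 : θ < 2) (x : ℝ) :
    survival θ x = 2 * exp (-x) / (θ + (2 - θ) * exp (-x)) := by
  rw [survival, one_sub_div (denom_pos hθ0 hθ2 x).ne']
  ring

lemma survival_zero : survival θ 0 = 1 := by
  simp [survival]

lemma survival_pos (hθ0 : 0 < θ) (hθ2 : θ < 2) (x : ℝ) : 0 < survival θ x := by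
  have := denom_pos hθ0 hθ2 x
  rw [survival_eq hθ0 hθ2]
  positivity

lemma pdf_pos (hθ0 : 0 < θ) (hθ2 : θ < 2) (x : ℝ) : 0 < pdf θ x := by
  have := denom_pos hθ0 hθ2 x
  unfold pdf
  positivity

lemma hasDerivAt_survival (hθ0 : 0 < θ) (hθ2 : θ < 2) (x : ℝ) :
    HasDerivAt (survival θ) (-pdf θ x) x := by
  have hD := (denom_pos hθ0 hθ2 x).ne'
  have hexp : HasDerivAt (fun x ↦ exp (-x)) (-exp (-x)) x := by
    simpa using (hasDerivAt_neg x).exp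
  have h : HasDerivAt (fun y ↦ 2 * exp (-y) / (θ + (2 - θ) * exp (-y))) _ x :=
    (hexp.const_mul 2).div ((hexp.const_mul (2 - θ)).const_add θ) hD
  rw [funext (survival_eq hθ0 hθ2)]
  convert h using 1
  simp only [pdf]
  field_simp
  ring

lemma strictAnti_survival (hθ0 : 0 < θ) (hθ2 : θ < 2) : StrictAnti (survival θ) :=
  strictAnti_of_deriv_neg fun x ↦ by
    rw [(hasDerivAt_survival hθ0 hθ2 x).deriv, neg_lt_zero]
    exact pdf_pos hθ0 hθ2 x

lemma survival_image_Ioi (hθ0 : 0 < θ) (hθ2 : θ < 2) : survival θ '' Ioi 0 = Ioo 0 1 := by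
  ext s
  constructor
  · rintro ⟨x, hx, rfl⟩
    exact ⟨survival_pos hθ0 hθ2 x,
      survival_zero ▸ strictAnti_survival hθ0 hθ2 (mem_Ioi.mp hx)⟩
  · rintro ⟨hs0, hs1⟩
    have hden : 0 < 2 - (2 - θ) * s := by nlinarith
    set w := θ * s / (2 - (2 - θ) * s)
    have hw0 : 0 < w := by positivity
    have hw1 : w < 1 := by rw [div_lt_one hden]; nlinarith
    refine ⟨-log w, neg_pos.mpr (log_neg hw0 hw1), ?_⟩
    rw [survival_eq hθ0 hθ2, neg_neg, exp_log hw0, div_eq_iff (by nlinarith)]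
    linear_combination div_mul_cancel₀ (θ * s) hden.ne'

lemma one_sub_mul_survival (hθ0 : 0 < θ) (hθ2 : θ < 2) (x : ℝ) :
    1 - (1 - θ / 2) * survival θ x = θ / (θ + (2 - θ) * exp (-x)) := by
  have := (denom_pos hθ0 hθ2 x).ne'
  rw [survival_eq hθ0 hθ2]
  field_simp
  ring

lemma incBeta_eq_setIntegral_survival (hθ0 : 0 < θ) (hθ2 : θ < 2) (a b : ℝ) :
    incBeta (1 - θ / 2) a b = ∫ x in Ioi 0, (1 - θ / 2) * pdf θ x *
      ((1 - θ / 2) * survival θ x) ^ (a - 1) * (1 - (1 - θ / 2) * survival θ x) ^ (b - 1) := by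
  have hc : 0 < 1 - θ / 2 := by linarith
  have himage : (fun x ↦ (1 - θ / 2) * survival θ x) '' Ioi 0 = Ioo 0 (1 - θ / 2) := by
    rw [← image_image (fun s ↦ (1 - θ / 2) * s), survival_image_Ioi hθ0 hθ2,
      image_mul_left_Ioo hc, mul_zero, mul_one]
  rw [incBeta, intervalIntegral.integral_of_le hc.le, integral_Ioc_eq_integral_Ioo, ← himage,
    integral_image_eq_integral_abs_deriv_smul measurableSet_Ioi
      (fun x _ ↦ ((hasDerivAt_survival hθ0 hθ2 x).const_mul _).hasDerivWithinAt)
      ((strictAnti_survival hθ0 hθ2).const_mul hc).injective.injOn]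
  refine setIntegral_congr_fun measurableSet_Ioi fun x _ ↦ ?_
  rw [smul_eq_mul, mul_neg, abs_neg, abs_of_pos (mul_pos hc (pdf_pos hθ0 hθ2 x))]
  ring

lemma exp_mul_survival_rpow_mul_pdf (hθ0 : 0 < θ) (hθ2 : θ < 2) (γ t x : ℝ) :
    exp (t * x) * survival θ x ^ (γ - 1) * pdf θ x =
      (2 / (2 - θ)) ^ γ * (θ / (2 - θ)) ^ (-t) *
        ((1 - θ / 2) * pdf θ x * ((1 - θ / 2) * survival θ x) ^ (γ - t - 1) *
          (1 - (1 - θ / 2) * survival θ x) ^ (1 + t - 1)) := by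
  have h2θ : 0 < 2 - θ := by linarith
  have hD := denom_pos hθ0 hθ2 x
  have hw := exp_pos (-x)
  rw [one_sub_mul_survival hθ0 hθ2, survival_eq hθ0 hθ2, pdf,
    show exp (t * x) = exp (-x) ^ (-t) by rw [← exp_mul]; ring_nf,
    show 1 - θ / 2 = (2 - θ) / 2 by ring]
  simp (disch := positivity) only [div_rpow, mul_rpow, rpow_sub, rpow_neg, rpow_add, rpow_one]
  field_simp

end HLG

theorem hlg_weighted_integral_general (θ : ℝ) (hθ0 : 0 < θ) (hθ1 : θ < 1)
    (γ t : ℝ) :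
    ∫ x in Set.Ioi (0 : ℝ),
        Real.exp (t * x) *
          (1 - θ * (1 - Real.exp (-x)) / (θ + (2 - θ) * Real.exp (-x))) ^ (γ - 1) *
          (2 * θ * Real.exp (-x) / (θ + (2 - θ) * Real.exp (-x)) ^ 2) =
      (2 / (2 - θ)) ^ γ * (θ / (2 - θ)) ^ (-t) * incBeta (1 - θ / 2) (γ - t) (1 + t) := by
  have hθ2 : θ < 2 := by linarith
  rw [HLG.incBeta_eq_setIntegral_survival hθ0 hθ2, ← integral_const_mul]
  exact setIntegral_congr_fun measurableSet_Ioi fun x _ ↦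
    HLG.exp_mul_survival_rpow_mul_pdf hθ0 hθ2 γ t x

theorem hlg_weighted_integral (θ : ℝ) (hθ0 : 0 < θ) (hθ1 : θ < 1)
    (γ t : ℝ) (hγ : 0 < γ) (ht : t < γ) :
    ∫ x in Set.Ioi (0 : ℝ),
        Real.exp (t * x) *
          (1 - θ * (1 - Real.exp (-x)) / (θ + (2 - θ) * Real.exp (-x))) ^ (γ - 1) *
          (2 * θ * Real.exp (-x) / (θ + (2 - θ) * Real.exp (-x)) ^ 2) =
      (2 / (2 - θ)) ^ γ * (θ / (2 - θ)) ^ (-t) * incBeta (1 - θ / 2) (γ - t) (1 + t) :=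
  hlg_weighted_integral_general θ hθ0 hθ1 γ t
end

section
/- The HLG(θ) hazard rate h(x) = f(x)/F̄(x) = θ/(θ + (2−θ)e^{-x}) is strictly increasing on (0,∞) for 0 < θ < 1, with h(0⁺) = θ/2 and h(x) → 1 as x → ∞. -/
/-! Cancelling `2 e^{-x} / (θ + (2 - θ) e^{-x})` leaves `h(x) = θ / (θ + (2 - θ) e^{-x})`, whose
denominator is continuous and decreases strictly from `2` at `x = 0` to `θ` at infinity. -/

open Filter Set Topology Real

section ExpNegFraction

variable {a b c : ℝ}

theorem add_mul_exp_neg_pos (ha : 0 ≤ a) (hb : 0 < b) (x : ℝ) : 0 < a + b * exp (-x) := by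
  positivity

theorem strictMono_div_add_mul_exp_neg (ha : 0 ≤ a) (hb : 0 < b) (hc : 0 < c) :
    StrictMono fun x => c / (a + b * exp (-x)) := by
  intro x y hxy
  have hexp : exp (-y) < exp (-x) := exp_lt_exp.mpr (neg_lt_neg hxy)
  exact div_lt_div_of_pos_left hc (add_mul_exp_neg_pos ha hb y) (by gcongr)

theorem continuous_div_add_mul_exp_neg (ha : 0 ≤ a) (hb : 0 < b) :
    Continuous fun x => c / (a + b * exp (-x)) :=
  continuous_const.div (by fun_prop) fun x => (add_mul_exp_neg_pos ha hb x).ne'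

theorem tendsto_div_add_mul_exp_neg_atTop (ha : a ≠ 0) :
    Tendsto (fun x => c / (a + b * exp (-x))) atTop (𝓝 (c / a)) := by
  have hden : Tendsto (fun x => a + b * exp (-x)) atTop (𝓝 a) := by
    simpa using tendsto_exp_neg_atTop_nhds_zero.const_mul b |>.const_add a
  exact tendsto_const_nhds.div hden ha

end ExpNegFraction

theorem hlg_hazard_rate (θ : ℝ) (hθ0 : 0 < θ) (hθ1 : θ < 1) :
    (∀ x : ℝ, 0 < x →
      (2 * θ * Real.exp (-x) / (θ + (2 - θ) * Real.exp (-x)) ^ 2) /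
          (2 * Real.exp (-x) / (θ + (2 - θ) * Real.exp (-x))) =
        θ / (θ + (2 - θ) * Real.exp (-x))) ∧
    StrictMonoOn (fun x : ℝ => θ / (θ + (2 - θ) * Real.exp (-x))) (Set.Ioi 0) ∧
    Tendsto (fun x : ℝ => θ / (θ + (2 - θ) * Real.exp (-x)))
      (nhdsWithin 0 (Set.Ioi 0)) (nhds (θ / 2)) ∧
    Tendsto (fun x : ℝ => θ / (θ + (2 - θ) * Real.exp (-x))) atTop (nhds 1) := by
  have hθ : 0 ≤ θ := hθ0.le
  have h2θ : 0 < 2 - θ := by linarith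
  refine ⟨fun x _ => ?_, (strictMono_div_add_mul_exp_neg hθ h2θ hθ0).strictMonoOn _, ?_, ?_⟩
  · have hden := (add_mul_exp_neg_pos hθ h2θ x).ne'
    have hexp := (exp_pos (-x)).ne'
    field_simp
  · have h := (continuous_div_add_mul_exp_neg (c := θ) hθ h2θ).tendsto 0
    simp only [neg_zero, exp_zero, mul_one, add_sub_cancel] at h
    exact h.mono_left nhdsWithin_le_nhds
  · simpa [div_self hθ0.ne'] using tendsto_div_add_mul_exp_neg_atTop (c := θ) (b := 2 - θ) hθ0.ne'
end
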